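/- Let Q ∈ S^d_{>0} be a positive definite quadratic form with Delone subdivision D (with vertex-set ℤ^d), let P_1, …, P_n be a representative system of the d-dimensional Delone polytopes in D that are pairwise inequivalent with respect to Q, and for every P_i choose a d-dimensional simplex L_i with vert L_i ⊆ vert P_i. Then the inhomogeneous minimum of Q satisfies μ(Q) ≤ 1 if and only if the block-diagonal matrix diag(BR_{L_1}(Q), …, BR_{L_n}(Q)) is positive semidefinite. -/

import Mathlib

open Matrix Finset MeasureTheory Polynomial

noncomputable section

namespace Vor

variable {d : ℕ}

/-- The space of real `d × d` matrices (quadratic forms live in the symmetric ones). -/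
abbrev Md (d : ℕ) := Matrix (Fin d) (Fin d) ℝ

/-- Trace inner product `⟨A, B⟩ = trace (A * B)` on matrices. -/
def minner (A B : Md d) : ℝ := (A * B).trace

/-- The quadratic form `Q[x] = xᵗ Q x`. -/
def qf (Q : Md d) (x : Fin d → ℝ) : ℝ := x ⬝ᵥ Q.mulVec x

/-- The real vector associated to an integral vector. -/
def intVec (v : Fin d → ℤ) : Fin d → ℝ := fun j => (v j : ℝ)

/-- The lattice `ℤ^d` viewed inside `ℝ^d`. -/
def latticeZ (d : ℕ) : Set (Fin d → ℝ) := Set.range (intVec (d := d))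

/-- A standard periodic set `Λ = ⋃ i, (tᵢ + ℤ^d)`. -/
def IsStdPeriodic (Λ : Set (Fin d → ℝ)) : Prop :=
  ∃ m : ℕ, 0 < m ∧ ∃ t : Fin m → (Fin d → ℝ),
    Λ = {x | ∃ (i : Fin m) (v : Fin d → ℤ), x = t i + intVec v}

/-- The real matrix obtained from an integral matrix. -/
def rmat (U : Matrix (Fin d) (Fin d) ℤ) : Md d := U.map fun z => (z : ℝ)

/-- `U ∈ GL_d(ℤ)`. -/
def IsUnimodular (U : Matrix (Fin d) (Fin d) ℤ) : Prop := IsUnit U.det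

/-- The action `Q ↦ Uᵗ Q U`. -/
def conjQ (U : Matrix (Fin d) (Fin d) ℤ) (Q : Md d) : Md d := (rmat U)ᵀ * Q * rmat U

/-- The action of `GL_d(ℤ)` on subsets of the space of forms. -/
def conjSet (U : Matrix (Fin d) (Fin d) ℤ) (S : Set (Md d)) : Set (Md d) := conjQ U '' S

/-- The rational closure `S̃^d_{≥0}`: positive semidefinite forms that are
`GL_d(ℤ)`-equivalent to a block diagonal form with a zero block and a positive
definite block. -/
def RationalClosure (d : ℕ) : Set (Md d) :=
  {Q | Q.PosSemidef ∧ ∃ U : Matrix (Fin d) (Fin d) ℤ, IsUnimodular U ∧ ∃ k : ℕ, k ≤ d ∧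
    (∀ i j : Fin d, ((i : ℕ) < k ∨ (j : ℕ) < k) → conjQ U Q i j = 0) ∧
    (∀ x : Fin d → ℝ, (∀ i : Fin d, (i : ℕ) < k → x i = 0) → x ≠ 0 → 0 < qf (conjQ U Q) x)}

/-- `P` is a Delone polyhedron of the form `Q` with respect to the point set `Λ`:
`P` is the convex hull of the set `S` of points of `Λ` lying on some sphere
(center `c`, radius `r`) which contains no other point of `Λ` on it or inside. -/
def IsDelonePoly (Λ : Set (Fin d → ℝ)) (Q : Md d) (P : Set (Fin d → ℝ)) : Prop :=
  ∃ S : Set (Fin d → ℝ), S ⊆ Λ ∧ S.Nonempty ∧ P = convexHull ℝ S ∧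
    ∃ (c : Fin d → ℝ) (r : ℝ),
      (∀ v ∈ S, qf Q (c - v) = r ^ 2) ∧ ∀ v ∈ Λ, v ∉ S → r ^ 2 < qf Q (c - v)

/-- The Delone subdivision of `Q` with respect to `Λ`. -/
def DelSub (Λ : Set (Fin d → ℝ)) (Q : Md d) : Set (Set (Fin d → ℝ)) :=
  {P | IsDelonePoly Λ Q P}

/-- The secondary cone of a (Delone) subdivision `D`:
all forms in the rational closure whose Delone subdivision is `D`. -/
def SecCone (Λ : Set (Fin d → ℝ)) (D : Set (Set (Fin d → ℝ))) : Set (Md d) :=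
  {Q | Q ∈ RationalClosure d ∧ DelSub Λ Q = D}

/-- `α` gives the coefficients of an affine combination of the points of `V` representing `w`. -/
def IsAffComb (V : Finset (Fin d → ℝ)) (α : (Fin d → ℝ) → ℝ) (w : Fin d → ℝ) : Prop :=
  (∑ v ∈ V, α v) = 1 ∧ (∑ v ∈ V, α v • v) = w

/-- The form `N_{V,w} = wwᵗ - ∑_{v ∈ V} α_v vvᵗ`. -/
def Nform (V : Finset (Fin d → ℝ)) (α : (Fin d → ℝ) → ℝ) (w : Fin d → ℝ) : Md d :=
  vecMulVec w w - ∑ v ∈ V, α v • vecMulVec v v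

/-- A finite set of points is affinely independent. -/
def AffIndep (V : Finset (Fin d → ℝ)) : Prop :=
  AffineIndependent ℝ (fun v : {x // x ∈ V} => (v : Fin d → ℝ))

/-- Insertion into a finset (classical, to avoid decidability assumptions). -/
def finsert (w : Fin d → ℝ) (V : Finset (Fin d → ℝ)) : Finset (Fin d → ℝ) :=
  letI := Classical.decEq (Fin d → ℝ)
  insert w V

/-- A polyhedron: a finite intersection of closed halfspaces. -/
def IsPolyhedron (P : Set (Fin d → ℝ)) : Prop :=
  ∃ (n : ℕ) (a : Fin n → (Fin d → ℝ)) (b : Fin n → ℝ), P = {x | ∀ i, a i ⬝ᵥ x ≤ b i}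

/-- `F` is a face of `P` (cut out by a supporting hyperplane). -/
def IsFaceOf (F P : Set (Fin d → ℝ)) : Prop :=
  ∃ (a : Fin d → ℝ) (b : ℝ), (∀ x ∈ P, a ⬝ᵥ x ≤ b) ∧ F = {x ∈ P | a ⬝ᵥ x = b}

/-- The (affine) dimension of a set of points. -/
def sdim (S : Set (Fin d → ℝ)) : ℕ := Module.finrank ℝ ↥(vectorSpan ℝ S)

/-- A (face-to-face) polyhedral subdivision of `ℝ^d`. -/
def IsPolySubdiv (D : Set (Set (Fin d → ℝ))) : Prop :=
  (∀ P ∈ D, IsPolyhedron P ∧ P.Nonempty) ∧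
  ⋃₀ D = Set.univ ∧
  (∀ P ∈ D, ∀ F : Set (Fin d → ℝ), IsFaceOf F P → F.Nonempty → F ∈ D) ∧
  ∀ P ∈ D, ∀ P' ∈ D, (P ∩ P').Nonempty → IsFaceOf (P ∩ P') P

/-- `D` has vertex-set `Λ`: every member is the convex hull of its points of `Λ`. -/
def HasVertexSet (Λ : Set (Fin d → ℝ)) (D : Set (Set (Fin d → ℝ))) : Prop :=
  ∀ P ∈ D, P = convexHull ℝ (Λ ∩ P)

/-- A (closed) polyhedral cone in the space of matrices. -/
def IsPolyConeM (C : Set (Md d)) : Prop :=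
  ∃ (n : ℕ) (A : Fin n → Md d), C = {Q | ∀ i, 0 ≤ minner (A i) Q}

/-- `F` is a face of the cone `C` in the space of matrices. -/
def IsFaceOfM (F C : Set (Md d)) : Prop :=
  ∃ A : Md d, (∀ X ∈ C, 0 ≤ minner A X) ∧ F = {X ∈ C | minner A X = 0}

/-- A relatively open polyhedral cone: solutions of finitely many linear equalities and
strict linear inequalities. -/
def IsRelOpenPolyCone (C : Set (Md d)) : Prop :=
  ∃ (n m : ℕ) (A : Fin n → Md d) (B : Fin m → Md d),
    C = {Q | (∀ i, minner (A i) Q = 0) ∧ ∀ j, 0 < minner (B j) Q}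

/-- Condition (a): the linear equalities coming from the `d`-dimensional cells of `D`. -/
def condA (Λ : Set (Fin d → ℝ)) (D : Set (Set (Fin d → ℝ))) (Q : Md d) : Prop :=
  ∀ P ∈ D, sdim P = d →
    ∀ V : Finset (Fin d → ℝ), (↑V : Set (Fin d → ℝ)) ⊆ Λ ∩ P → AffIndep V → V.card = d + 1 →
      ∀ w ∈ Λ ∩ P, ∀ α : (Fin d → ℝ) → ℝ, IsAffComb V α w →
        minner (Nform V α w) Q = 0

/-- Condition (b): the linear strict inequalities coming from the `(d-1)`-dimensional
cells of `D`. -/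
def condB (Λ : Set (Fin d → ℝ)) (D : Set (Set (Fin d → ℝ))) (Q : Md d) : Prop :=
  ∀ F ∈ D, sdim F = d - 1 →
    ∀ P ∈ D, ∀ P' ∈ D, sdim P = d → sdim P' = d → P ≠ P' → F = P ∩ P' →
      ∀ V : Finset (Fin d → ℝ), (↑V : Set (Fin d → ℝ)) ⊆ Λ ∩ F → AffIndep V → V.card = d →
        ∀ w ∈ (Λ ∩ P) \ F, ∀ w' ∈ (Λ ∩ P') \ F,
          ∀ α : (Fin d → ℝ) → ℝ, IsAffComb (finsert w V) α w' →
            0 < minner (Nform (finsert w V) α w') Q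

/-- The lifting map `w_Q(x) = (x, Q[x]) ∈ ℝ^{d+1}`. -/
def liftQ (Q : Md d) (x : Fin d → ℝ) : Fin (d + 1) → ℝ := Fin.snoc x (qf Q x)

/-- Projection `ℝ^{d+1} → ℝ^d` onto the first `d` coordinates. -/
def projd (y : Fin (d + 1) → ℝ) : Fin d → ℝ := fun i => y i.castSucc

/-- `G` is a finite subgroup of `GL_d(ℤ)` (given as a set of integral matrices). -/
def IsFinMatGroup (G : Set (Matrix (Fin d) (Fin d) ℤ)) : Prop :=
  G.Finite ∧ (1 : Matrix (Fin d) (Fin d) ℤ) ∈ G ∧ (∀ g ∈ G, IsUnimodular g) ∧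
    (∀ g ∈ G, ∀ h ∈ G, g * h ∈ G) ∧ ∀ g ∈ G, g⁻¹ ∈ G

/-- The space of invariant forms `F(G)` of `G ≤ GL_d(ℤ)`. -/
def FG (G : Set (Matrix (Fin d) (Fin d) ℤ)) : Set (Md d) :=
  {Q | Q.IsSymm ∧ ∀ g ∈ G, conjQ g Q = Q}

/-- The Bravais group `B(G)`: the pointwise stabilizer of `F(G)` in `GL_d(ℤ)`. -/
def BG (G : Set (Matrix (Fin d) (Fin d) ℤ)) : Set (Matrix (Fin d) (Fin d) ℤ) :=
  {g | IsUnimodular g ∧ ∀ Q ∈ FG G, conjQ g Q = Q}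

/-- The normalizer `N(B(G))` of the Bravais group in `GL_d(ℤ)`. -/
def NBG (G : Set (Matrix (Fin d) (Fin d) ℤ)) : Set (Matrix (Fin d) (Fin d) ℤ) :=
  {n | IsUnimodular n ∧ ∀ b : Matrix (Fin d) (Fin d) ℤ, b ∈ BG G ↔ n⁻¹ * b * n ∈ BG G}

/-- The inhomogeneous minimum `μ(Q) = sup_x inf_{v ∈ ℤ^d} Q[x - v]`. -/
def InhomMin (Q : Md d) : ℝ :=
  ⨆ x : Fin d → ℝ, ⨅ v : Fin d → ℤ, qf Q (x - intVec v)

/-- The bilinear form `(x, y) = xᵗ Q y` associated to `Q`. -/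
def bip (Q : Md d) (x y : Fin d → ℝ) : ℝ := x ⬝ᵥ Q.mulVec y

/-- `F` is a facet of the subdivision `D`: a `(d-1)`-dimensional cell, the intersection of
two adjacent `d`-dimensional cells. -/
def IsFacetOfSubdiv (D : Set (Set (Fin d → ℝ))) (F : Set (Fin d → ℝ)) : Prop :=
  F ∈ D ∧ sdim F = d - 1 ∧
    ∃ P ∈ D, ∃ P' ∈ D, sdim P = d ∧ sdim P' = d ∧ P ≠ P' ∧ F = P ∩ P'

/-- The linear subspace `U` of forms satisfying all equalities of the secondary cone of `D`. -/
def UD (Λ : Set (Fin d → ℝ)) (D : Set (Set (Fin d → ℝ))) : Set (Md d) :=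
  {X | X.IsSymm ∧ condA Λ D X}

/-- `ND` assigns to each facet `F` of `D` the form `N_{D,F}`: the unit-norm form in `U`
such that the projection onto `U` of every form `N_{V∪{w},w'}` attached to `F` is a
positive multiple of it. -/
def IsNDassign (Λ : Set (Fin d → ℝ)) (D : Set (Set (Fin d → ℝ)))
    (ND : Set (Fin d → ℝ) → Md d) : Prop :=
  ∀ F, IsFacetOfSubdiv D F → ND F ∈ UD Λ D ∧ minner (ND F) (ND F) = 1 ∧
    ∀ P ∈ D, ∀ P' ∈ D, sdim P = d → sdim P' = d → P ≠ P' → F = P ∩ P' →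
      ∀ V : Finset (Fin d → ℝ), (↑V : Set (Fin d → ℝ)) ⊆ Λ ∩ F → AffIndep V → V.card = d →
        ∀ w ∈ (Λ ∩ P) \ F, ∀ w' ∈ (Λ ∩ P') \ F,
          ∀ α : (Fin d → ℝ) → ℝ, IsAffComb (finsert w V) α w' →
            ∃ β : ℝ, 0 < β ∧ ∀ X ∈ UD Λ D,
              minner (Nform (finsert w V) α w') X = β * minner (ND F) X

/-- The set `R_F` of facets of `D` whose form `N_{D,F'}` projects onto `T` to a positive
multiple of `NF`. -/
def RFset (Λ : Set (Fin d → ℝ)) (D : Set (Set (Fin d → ℝ)))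
    (ND : Set (Fin d → ℝ) → Md d) (T : Set (Md d)) (NF : Md d) :
    Set (Set (Fin d → ℝ)) :=
  {F | IsFacetOfSubdiv D F ∧ ∃ γ : ℝ, 0 < γ ∧ ∀ X ∈ T, minner (ND F) X = γ * minner NF X}

/-- The chain relation on the facets of `R_F`: connected by a chain of adjacent
`d`-dimensional cells of `D`. -/
def FlipRel (D RFs : Set (Set (Fin d → ℝ))) (F1 F2 : Set (Fin d → ℝ)) : Prop :=
  ∃ (n : ℕ) (Fch : Fin (n + 1) → Set (Fin d → ℝ)) (Pch : Fin (n + 2) → Set (Fin d → ℝ)),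
    Fch 0 = F1 ∧ Fch (Fin.last n) = F2 ∧ (∀ i, Fch i ∈ RFs) ∧
    ∀ i : Fin (n + 1), Pch i.castSucc ∈ D ∧ Pch i.succ ∈ D ∧
      sdim (Pch i.castSucc) = d ∧ sdim (Pch i.succ) = d ∧
      Fch i = Pch i.castSucc ∩ Pch i.succ

/-- `C` is an equivalence class of the chain relation on `RFs`. -/
def IsEqClass (D RFs C : Set (Set (Fin d → ℝ))) : Prop :=
  C ⊆ RFs ∧ C.Nonempty ∧ ∀ F1 ∈ C, ∀ F2 ∈ RFs, (FlipRel D RFs F1 F2 ↔ F2 ∈ C)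

/-- The vertex set `V_C` of an equivalence class `C`: all vertices of `d`-dimensional
cells of `D` having a facet in `C`. -/
def VCset (Λ : Set (Fin d → ℝ)) (D C : Set (Set (Fin d → ℝ))) : Set (Fin d → ℝ) :=
  {x | ∃ P ∈ D, sdim P = d ∧ (∃ F ∈ C, IsFaceOf F P) ∧ x ∈ Λ ∩ P}

/-- A lower facet of a set in `ℝ^{d+1}`: a facet whose outer normal has negative last
coordinate. -/
def IsLowerFacet (S F : Set (Fin (d + 1) → ℝ)) : Prop :=
  ∃ (a : Fin (d + 1) → ℝ) (b : ℝ), (∀ x ∈ S, a ⬝ᵥ x ≤ b) ∧ F = {x ∈ S | a ⬝ᵥ x = b} ∧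
    Module.finrank ℝ ↥(vectorSpan ℝ F) = d ∧ a (Fin.last d) < 0

/-- An upper facet of a set in `ℝ^{d+1}`: a facet whose outer normal has positive last
coordinate. -/
def IsUpperFacet (S F : Set (Fin (d + 1) → ℝ)) : Prop :=
  ∃ (a : Fin (d + 1) → ℝ) (b : ℝ), (∀ x ∈ S, a ⬝ᵥ x ≤ b) ∧ F = {x ∈ S | a ⬝ᵥ x = b} ∧
    Module.finrank ℝ ↥(vectorSpan ℝ F) = d ∧ 0 < a (Fin.last d)

/-- The `(d+1) × (d+1)` matrix `BR_L(Q)` of a simplex `L = conv{0, v₁, …, v_d}`. -/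
def BRmat (Q : Md d) (v : Fin d → (Fin d → ℝ)) :
    Matrix (Fin (d + 1)) (Fin (d + 1)) ℝ :=
  Matrix.of fun i j =>
    if hi : i = 0 then
      (if hj : j = 0 then 4 else bip Q (v (j.pred hj)) (v (j.pred hj)))
    else if hj : j = 0 then bip Q (v (i.pred hi)) (v (i.pred hi))
    else bip Q (v (i.pred hi)) (v (j.pred hj))

/-- Two Delone polytopes are equivalent with respect to `Q`: one is obtained from the
other by an automorphism of `Q` followed by an integral translation. -/
def EquivPolyQ (Q : Md d) (P P' : Set (Fin d → ℝ)) : Prop :=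
  ∃ U : Matrix (Fin d) (Fin d) ℤ, IsUnimodular U ∧ conjQ U Q = Q ∧
    ∃ t : Fin d → ℤ, P = (fun x => intVec t + (rmat U).mulVec x) '' P'

/-!
For a `d`-simplex with vertices `0, L₁, …, L_d` and circumcenter `c` one has
`yᵗ BR_L(Q) y = Q[∑ⱼ yⱼ Lⱼ + 2 y₀ c] + 4 y₀² (1 - Q[c])` for `y = (y₀, y₁, …, y_d)`, so
`BR_L(Q) ⪰ 0` iff `Q[c] ≤ 1`, i.e. iff the circumradius of the Delone polytope containing the
simplex is at most `1`.

The circumcenter `c` of a Delone polytope satisfies `Q[c] = min_v Q[c - v] ≤ μ(Q)`, which gives one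
direction. Conversely, `x ↦ min_v Q[x - v]` is periodic and upper semicontinuous, so it attains
its supremum `μ(Q)` at some `x*`. The lattice points nearest to `x*` affinely span `ℝ^d`: otherwise
moving `x*` away from all of them, `Q`-orthogonally to their span, would increase the distance to
the lattice. They are therefore the vertices of a `d`-dimensional Delone polytope of squared
circumradius `μ(Q)`, which is equivalent to one of the `Pᵢ`.
-/

lemma intVec_add (u v : Fin d → ℤ) : intVec (u + v) = intVec u + intVec v := by
  ext; simp [intVec]

lemma norm_intVec (v : Fin d → ℤ) : ‖intVec v‖ = ‖v‖ := rfl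

lemma rmat_mulVec_intVec (U : Matrix (Fin d) (Fin d) ℤ) (v : Fin d → ℤ) :
    rmat U *ᵥ intVec v = intVec (U *ᵥ v) := by
  ext i; simp [rmat, intVec, mulVec, dotProduct]

section QuadraticForm

variable {Q : Md d}

lemma isSymm_of_posSemidef (hQ : Q.PosSemidef) : Q.IsSymm := by
  have h := hQ.isHermitian
  rwa [Matrix.IsHermitian, conjTranspose_eq_transpose_of_trivial] at h

lemma qf_eq_bip (x : Fin d → ℝ) : qf Q x = bip Q x x := rfl

lemma bip_comm (hQ : Q.IsSymm) (x y : Fin d → ℝ) : bip Q x y = bip Q y x := by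
  rw [bip, bip, dotProduct_mulVec, ← mulVec_transpose, hQ.eq, dotProduct_comm]

lemma qf_add (hQ : Q.IsSymm) (x y : Fin d → ℝ) :
    qf Q (x + y) = qf Q x + 2 * bip Q x y + qf Q y := by
  have h := bip_comm hQ y x
  simp only [qf, bip, mulVec_add, dotProduct_add, add_dotProduct] at h ⊢
  rw [h]; ring

lemma qf_sub (hQ : Q.IsSymm) (x y : Fin d → ℝ) :
    qf Q (x - y) = qf Q x - 2 * bip Q x y + qf Q y := by
  have h := bip_comm hQ y x
  simp only [qf, bip, mulVec_sub, dotProduct_sub, sub_dotProduct] at h ⊢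
  rw [h]; ring

lemma qf_smul (t : ℝ) (x : Fin d → ℝ) : qf Q (t • x) = t ^ 2 * qf Q x := by
  simp only [qf, mulVec_smul, dotProduct_smul, smul_dotProduct, smul_eq_mul]; ring

lemma qf_neg (x : Fin d → ℝ) : qf Q (-x) = qf Q x := by
  simp [qf, mulVec_neg]

lemma qf_nonneg (hQ : Q.PosSemidef) (x : Fin d → ℝ) : 0 ≤ qf Q x := by
  simpa [qf] using hQ.dotProduct_mulVec_nonneg x

lemma qf_pos (hQ : Q.PosDef) {x : Fin d → ℝ} (hx : x ≠ 0) : 0 < qf Q x := by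
  simpa [qf] using hQ.dotProduct_mulVec_pos hx

lemma continuous_qf : Continuous (qf Q) := by
  unfold qf; fun_prop

lemma qf_add_le (hQ : Q.PosSemidef) (x y : Fin d → ℝ) :
    qf Q (x + y) ≤ 2 * qf Q x + 2 * qf Q y := by
  have h := qf_nonneg hQ (x - y)
  rw [qf_sub (isSymm_of_posSemidef hQ)] at h
  rw [qf_add (isSymm_of_posSemidef hQ)]
  linarith

lemma convexOn_qf (hQ : Q.PosSemidef) : ConvexOn ℝ Set.univ (qf Q) := by
  refine ⟨convex_univ, fun x _ y _ α β hα hβ hαβ => ?_⟩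
  have key : α * qf Q x + β * qf Q y - qf Q (α • x + β • y) = α * β * qf Q (x - y) := by
    obtain rfl : β = 1 - α := by linarith
    simp only [qf, mulVec_add, mulVec_sub, mulVec_smul, dotProduct_add, add_dotProduct,
      dotProduct_sub, sub_dotProduct, dotProduct_smul, smul_dotProduct, smul_eq_mul]
    ring
  simp only [smul_eq_mul]
  nlinarith [mul_nonneg (mul_nonneg hα hβ) (qf_nonneg hQ (x - y))]

lemma convex_setOf_qf_sub_le (hQ : Q.PosSemidef) (c : Fin d → ℝ) (ρ : ℝ) :
    Convex ℝ {y | qf Q (c - y) ≤ ρ} := by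
  have hset : {y | qf Q (c - y) ≤ ρ} = (fun y => y + -c) ⁻¹' {z | z ∈ Set.univ ∧ qf Q z ≤ ρ} :=
    Set.ext fun y => by
      show qf Q (c - y) ≤ ρ ↔ True ∧ qf Q (y + -c) ≤ ρ
      rw [true_and, ← sub_eq_add_neg, ← qf_neg, neg_sub]
  exact hset ▸ ((convexOn_qf hQ).convex_le ρ).translate_preimage_left (-c)

lemma qf_rmat_mulVec {U : Matrix (Fin d) (Fin d) ℤ} (hUQ : conjQ U Q = Q) (x : Fin d → ℝ) :
    qf Q (rmat U *ᵥ x) = qf Q x :=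
  calc qf Q (rmat U *ᵥ x) = x ᵥ* (rmat U)ᵀ ⬝ᵥ (Q * rmat U) *ᵥ x := by
        rw [qf, vecMul_transpose, mulVec_mulVec]
    _ = x ⬝ᵥ conjQ U Q *ᵥ x := by rw [← dotProduct_mulVec, mulVec_mulVec, conjQ, Matrix.mul_assoc]
    _ = qf Q x := by rw [hUQ, qf]

lemma exists_pos_mul_norm_sq_le_qf (hQ : Q.PosDef) :
    ∃ ε > 0, ∀ y : Fin d → ℝ, ε * ‖y‖ ^ 2 ≤ qf Q y := by
  cases isEmpty_or_nonempty (Fin d) with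
  | inl _ => exact ⟨1, one_pos, fun y => by simp [Subsingleton.elim y 0, qf]⟩
  | inr _ =>
    obtain ⟨y₀, hy₀, hmin⟩ := (isCompact_sphere (0 : Fin d → ℝ) 1).exists_isMinOn
      (NormedSpace.sphere_nonempty.2 zero_le_one) (continuous_qf (Q := Q)).continuousOn
    refine ⟨qf Q y₀, qf_pos hQ (ne_zero_of_mem_unit_sphere ⟨y₀, hy₀⟩), fun y => ?_⟩
    rcases eq_or_ne y 0 with rfl | hy
    · simp [qf]
    have hu : ‖y‖⁻¹ • y ∈ Metric.sphere (0 : Fin d → ℝ) 1 := by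
      simp [norm_smul, hy]
    have h : qf Q y₀ ≤ qf Q (‖y‖⁻¹ • y) := hmin hu
    rw [qf_smul, inv_pow, ← div_eq_inv_mul, le_div_iff₀ (by positivity)] at h
    exact h

lemma exists_ne_zero_forall_bip_eq_zero (hQ : Q.PosDef) {W : Submodule ℝ (Fin d → ℝ)}
    (hW : W ≠ ⊤) : ∃ u ≠ 0, ∀ w ∈ W, bip Q u w = 0 := by
  obtain ⟨f, hf0, hWf⟩ := W.exists_le_ker_of_lt_top (lt_top_iff_ne_top.2 hW)
  have hB : (Matrix.toBilin' Q).Nondegenerate :=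
    (nondegenerate_of_det_ne_zero hQ.det_pos.ne').toBilin'
  refine ⟨((Matrix.toBilin' Q).toDual hB).symm f, by simpa using hf0, fun w hw => ?_⟩
  rw [bip, ← Matrix.toBilin'_apply', LinearMap.BilinForm.apply_toDual_symm_apply]
  exact hWf hw

end QuadraticForm

section LatticeDistance

variable {Q : Md d}

lemma finite_setOf_qf_sub_intVec_le (hQ : Q.PosDef) (x : Fin d → ℝ) (B : ℝ) :
    {v : Fin d → ℤ | qf Q (x - intVec v) ≤ B}.Finite := by
  obtain ⟨ε, hε, hle⟩ := exists_pos_mul_norm_sq_le_qf hQ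
  refine (isCompact_closedBall (0 : Fin d → ℤ) (‖x‖ + √(B / ε))).finite_of_discrete.subset
    fun v hv => ?_
  have hxv : ‖x - intVec v‖ ≤ √(B / ε) := by
    refine (abs_norm _).symm.le.trans (Real.abs_le_sqrt ?_)
    rw [le_div_iff₀ hε, mul_comm]
    exact (hle _).trans hv
  rw [mem_closedBall_zero_iff, ← norm_intVec]
  calc ‖intVec v‖ = ‖x - (x - intVec v)‖ := by rw [sub_sub_cancel]
    _ ≤ ‖x‖ + ‖x - intVec v‖ := norm_sub_le _ _
    _ ≤ ‖x‖ + √(B / ε) := by gcongr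

/-- `InhomMin Q` is, by definition, `⨆ x, latticeDistSq Q x`. -/
def latticeDistSq (Q : Md d) (x : Fin d → ℝ) : ℝ := ⨅ v : Fin d → ℤ, qf Q (x - intVec v)

lemma bddBelow_range_qf_sub_intVec (hQ : Q.PosSemidef) (x : Fin d → ℝ) :
    BddBelow (Set.range fun v : Fin d → ℤ => qf Q (x - intVec v)) :=
  ⟨0, by rintro _ ⟨v, rfl⟩; exact qf_nonneg hQ _⟩

lemma latticeDistSq_le (hQ : Q.PosSemidef) (x : Fin d → ℝ) (v : Fin d → ℤ) :
    latticeDistSq Q x ≤ qf Q (x - intVec v) :=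
  ciInf_le (bddBelow_range_qf_sub_intVec hQ x) v

lemma latticeDistSq_nonneg (hQ : Q.PosSemidef) (x : Fin d → ℝ) : 0 ≤ latticeDistSq Q x :=
  le_ciInf fun _ => qf_nonneg hQ _

lemma exists_latticeDistSq_eq (hQ : Q.PosDef) (x : Fin d → ℝ) :
    ∃ v, latticeDistSq Q x = qf Q (x - intVec v) := by
  obtain ⟨v, hv, hmin⟩ := Set.exists_min_image _ (fun v => qf Q (x - intVec v))
    (finite_setOf_qf_sub_intVec_le hQ x (qf Q (x - intVec 0))) ⟨0, le_refl (qf Q (x - intVec 0))⟩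
  refine ⟨v, le_antisymm (latticeDistSq_le hQ.posSemidef x v) (le_ciInf fun w => ?_)⟩
  by_cases hw : qf Q (x - intVec w) ≤ qf Q (x - intVec 0)
  · exact hmin w hw
  · exact le_trans hv (le_of_not_ge hw)

lemma latticeDistSq_add_intVec (x : Fin d → ℝ) (u : Fin d → ℤ) :
    latticeDistSq Q (x + intVec u) = latticeDistSq Q x := by
  rw [latticeDistSq, ← (Equiv.addRight u).iInf_comp]
  simp [intVec_add, latticeDistSq]

lemma upperSemicontinuous_latticeDistSq (hQ : Q.PosSemidef) :
    UpperSemicontinuous (latticeDistSq Q) :=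
  upperSemicontinuous_ciInf (bddBelow_range_qf_sub_intVec hQ) fun _ =>
    (continuous_qf.comp (continuous_id.sub continuous_const)).upperSemicontinuous

lemma exists_forall_latticeDistSq_le (hQ : Q.PosSemidef) :
    ∃ xs, ∀ x, latticeDistSq Q x ≤ latticeDistSq Q xs := by
  obtain ⟨xs, -, hxs⟩ := UpperSemicontinuousOn.exists_isMaxOn (Set.nonempty_Icc.2 zero_le_one)
    isCompact_Icc ((upperSemicontinuous_latticeDistSq hQ).upperSemicontinuousOn (Set.Icc 0 1))
  refine ⟨xs, fun x => ?_⟩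
  have hfrac : x - intVec (fun i => ⌊x i⌋) ∈ Set.Icc (0 : Fin d → ℝ) 1 :=
    ⟨fun i => by simp [intVec, Int.fract_nonneg], fun i => by simp [intVec, (Int.fract_lt_one _).le]⟩
  have h : latticeDistSq Q (x - intVec (fun i => ⌊x i⌋)) ≤ latticeDistSq Q xs := hxs hfrac
  rwa [← latticeDistSq_add_intVec _ (fun i => ⌊x i⌋), sub_add_cancel] at h

lemma latticeDistSq_le_inhomMin (hQ : Q.PosSemidef) (x : Fin d → ℝ) :
    latticeDistSq Q x ≤ InhomMin Q := by
  obtain ⟨xs, hxs⟩ := exists_forall_latticeDistSq_le hQ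
  exact le_ciSup ⟨_, by rintro _ ⟨y, rfl⟩; exact hxs y⟩ x

lemma inhomMin_eq_latticeDistSq (hQ : Q.PosSemidef) {xs : Fin d → ℝ}
    (hxs : ∀ x, latticeDistSq Q x ≤ latticeDistSq Q xs) : InhomMin Q = latticeDistSq Q xs :=
  le_antisymm (ciSup_le hxs) (latticeDistSq_le_inhomMin hQ xs)

end LatticeDistance

section EmptySphere

variable {Q : Md d} {c : Fin d → ℝ} {ρ : ℝ} {S : Set (Fin d → ℝ)}

def IsEmptySphere (Q : Md d) (c : Fin d → ℝ) (ρ : ℝ) (S : Set (Fin d → ℝ)) : Prop :=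
  (∀ v ∈ S, qf Q (c - v) = ρ) ∧ ∀ v ∈ latticeZ d, v ∉ S → ρ < qf Q (c - v)

lemma IsEmptySphere.le_qf (h : IsEmptySphere Q c ρ S) (v : Fin d → ℤ) :
    ρ ≤ qf Q (c - intVec v) := by
  by_cases hv : intVec v ∈ S
  · exact (h.1 _ hv).ge
  · exact (h.2 _ ⟨v, rfl⟩ hv).le

lemma IsEmptySphere.latticeDistSq_eq (h : IsEmptySphere Q c ρ S) (hS : S ⊆ latticeZ d)
    (hne : S.Nonempty) : latticeDistSq Q c = ρ := by
  obtain ⟨_, hvS⟩ := hne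
  obtain ⟨v, rfl⟩ := hS hvS
  exact le_antisymm ((ciInf_le ⟨ρ, by rintro _ ⟨w, rfl⟩; exact h.le_qf w⟩ v).trans (h.1 _ hvS).le)
    (le_ciInf h.le_qf)

lemma IsEmptySphere.mem_of_mem_convexHull (hQ : Q.PosSemidef) (h : IsEmptySphere Q c ρ S)
    {x : Fin d → ℝ} (hx : x ∈ latticeZ d) (hxS : x ∈ convexHull ℝ S) : x ∈ S := by
  by_contra hxS'
  exact (h.2 x hx hxS').not_ge
    (convexHull_min (fun v hv => (h.1 v hv).le) (convex_setOf_qf_sub_le hQ c ρ) hxS)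

lemma IsEmptySphere.image {U : Matrix (Fin d) (Fin d) ℤ} (hU : IsUnimodular U)
    (hUQ : conjQ U Q = Q) (t : Fin d → ℤ) (h : IsEmptySphere Q c ρ S) :
    IsEmptySphere Q (intVec t + rmat U *ᵥ c) ρ ((fun x => intVec t + rmat U *ᵥ x) '' S) := by
  have hdist : ∀ x, qf Q (intVec t + rmat U *ᵥ c - (intVec t + rmat U *ᵥ x)) = qf Q (c - x) :=
    fun x => by rw [add_sub_add_left_eq_sub, ← mulVec_sub, qf_rmat_mulVec hUQ]
  refine ⟨by rintro _ ⟨x, hx, rfl⟩; rw [hdist, h.1 x hx], ?_⟩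
  rintro _ ⟨w, rfl⟩ hw
  have hw' : intVec w = intVec t + rmat U *ᵥ intVec (U⁻¹ *ᵥ (w - t)) := by
    rw [rmat_mulVec_intVec, mulVec_mulVec, mul_nonsing_inv U hU, one_mulVec, ← intVec_add,
      add_sub_cancel]
  rw [hw'] at hw ⊢
  rw [hdist]
  exact h.2 _ ⟨_, rfl⟩ fun hS => hw ⟨_, hS, rfl⟩

lemma IsEmptySphere.isDelonePoly (h : IsEmptySphere Q c ρ S) (hS : S ⊆ latticeZ d)
    (hne : S.Nonempty) (hρ : 0 ≤ ρ) : IsDelonePoly (latticeZ d) Q (convexHull ℝ S) :=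
  ⟨S, hS, hne, rfl, c, √ρ, by rwa [Real.sq_sqrt hρ]⟩

def nearestPoints (Q : Md d) (x : Fin d → ℝ) : Set (Fin d → ℝ) :=
  {v | v ∈ latticeZ d ∧ qf Q (x - v) = latticeDistSq Q x}

lemma isEmptySphere_nearestPoints (hQ : Q.PosSemidef) (x : Fin d → ℝ) :
    IsEmptySphere Q x (latticeDistSq Q x) (nearestPoints Q x) := by
  refine ⟨fun v hv => hv.2, ?_⟩
  rintro _ ⟨v, rfl⟩ hv
  exact (latticeDistSq_le hQ x v).lt_of_ne fun h => hv ⟨⟨v, rfl⟩, h.symm⟩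

lemma nearestPoints_nonempty (hQ : Q.PosDef) (x : Fin d → ℝ) : (nearestPoints Q x).Nonempty :=
  let ⟨v, hv⟩ := exists_latticeDistSq_eq hQ x
  ⟨intVec v, ⟨v, rfl⟩, hv.symm⟩

end EmptySphere

section DeepHole

open Filter Topology

variable {Q : Md d}

lemma eventually_lt_qf_add_smul_sub (hQ : Q.PosDef) {x u : Fin d → ℝ} {r : ℝ} (hu : u ≠ 0)
    (hr : ∀ v, r ≤ qf Q (x - intVec v))
    (hdir : ∀ v, qf Q (x - intVec v) = r → 0 ≤ bip Q (x - intVec v) u) :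
    ∀ᶠ ε in 𝓝[>] (0 : ℝ), ∀ v, r < qf Q (x + ε • u - intVec v) := by
  have hexp : ∀ (ε : ℝ) v, qf Q (x + ε • u - intVec v) =
      qf Q (x - intVec v) + 2 * ε * bip Q (x - intVec v) u + ε ^ 2 * qf Q u := by
    intro ε v
    rw [add_sub_right_comm, qf_add (isSymm_of_posSemidef hQ.posSemidef), qf_smul]
    simp only [bip, mulVec_smul, dotProduct_smul, smul_eq_mul]
    ring
  have hfar : ∀ᶠ ε in 𝓝 (0 : ℝ), ∀ v, 2 * r + 2 < qf Q (x - intVec v) →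
      r < qf Q (x + ε • u - intVec v) := by
    have hsmall : ∀ᶠ ε in 𝓝 (0 : ℝ), ε ^ 2 * qf Q u < 1 :=
      ((continuous_pow 2).mul continuous_const).tendsto' 0 0 (by simp) |>.eventually_lt_const
        one_pos
    filter_upwards [hsmall] with ε hε v hv
    have h := qf_add_le hQ.posSemidef (x + ε • u - intVec v) (-(ε • u))
    rw [show x + ε • u - intVec v + -(ε • u) = x - intVec v by abel, qf_neg, qf_smul] at h
    linarith
  have hnear : ∀ᶠ ε in 𝓝[>] (0 : ℝ), ∀ v ∈ {v | qf Q (x - intVec v) ≤ 2 * r + 2},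
      r < qf Q (x + ε • u - intVec v) := by
    refine (eventually_all_finite (finite_setOf_qf_sub_intVec_le hQ x _)).2 fun v _ => ?_
    rcases (hr v).eq_or_lt with heq | hlt
    · filter_upwards [self_mem_nhdsWithin] with ε (hε : 0 < ε)
      have h1 := mul_nonneg hε.le (hdir v heq.symm)
      have h2 := mul_pos (pow_pos hε 2) (qf_pos hQ hu)
      rw [hexp, ← heq]
      linarith
    · refine nhdsWithin_le_nhds (Tendsto.eventually_const_lt hlt ?_)
      exact (continuous_qf.comp (by fun_prop)).tendsto' 0 _ (by simp)
  filter_upwards [hfar.filter_mono nhdsWithin_le_nhds, hnear] with ε hfar hnear v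
  by_cases hv : 2 * r + 2 < qf Q (x - intVec v)
  · exact hfar v hv
  · exact hnear v (le_of_not_gt hv)

lemma vectorSpan_nearestPoints_eq_top (hQ : Q.PosDef) {xs : Fin d → ℝ}
    (hmax : ∀ x, latticeDistSq Q x ≤ latticeDistSq Q xs) :
    vectorSpan ℝ (nearestPoints Q xs) = ⊤ := by
  by_contra hne
  obtain ⟨u, hu, horth⟩ := exists_ne_zero_forall_bip_eq_zero hQ hne
  obtain ⟨v₀, hv₀⟩ := nearestPoints_nonempty hQ xs
  have hconst : ∀ v ∈ nearestPoints Q xs, bip Q (xs - v) u = bip Q (xs - v₀) u := by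
    intro v hv
    have h := horth _ (vsub_mem_vectorSpan ℝ hv₀ hv)
    rw [bip_comm (isSymm_of_posSemidef hQ.posSemidef)] at h
    simp only [bip, vsub_eq_sub, sub_dotProduct] at h ⊢
    linarith
  obtain ⟨u', hu', hdir⟩ : ∃ u' ≠ 0, ∀ v ∈ nearestPoints Q xs, 0 ≤ bip Q (xs - v) u' := by
    rcases le_total 0 (bip Q (xs - v₀) u) with h | h
    · exact ⟨u, hu, fun v hv => (hconst v hv).symm ▸ h⟩
    · refine ⟨-u, neg_ne_zero.2 hu, fun v hv => ?_⟩
      simp only [bip, mulVec_neg, dotProduct_neg] at hconst h ⊢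
      linarith [hconst v hv]
  obtain ⟨ε, hε⟩ := (eventually_lt_qf_add_smul_sub hQ hu' (latticeDistSq_le hQ.posSemidef xs)
    fun v hv => hdir _ ⟨⟨v, rfl⟩, hv⟩).exists
  obtain ⟨v, hv⟩ := exists_latticeDistSq_eq hQ (xs + ε • u')
  exact (hmax _).not_gt (hv ▸ hε v)

end DeepHole

lemma sdim_convexHull_of_vectorSpan_eq_top {S : Set (Fin d → ℝ)} (h : vectorSpan ℝ S = ⊤) :
    sdim (convexHull ℝ S) = d := by
  rw [sdim, ← direction_affineSpan, affineSpan_convexHull, direction_affineSpan, h, finrank_top,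
    Module.finrank_fin_fun]

lemma image_convexHull_intVec_add_rmat_mulVec (U : Matrix (Fin d) (Fin d) ℤ) (t : Fin d → ℤ)
    (S : Set (Fin d → ℝ)) :
    (fun x => intVec t + rmat U *ᵥ x) '' convexHull ℝ S =
      convexHull ℝ ((fun x => intVec t + rmat U *ᵥ x) '' S) :=
  (AffineMap.const ℝ (Fin d → ℝ) (intVec t) + (rmat U).mulVecLin.toAffineMap).image_convexHull S

section BravaisRyshkov

variable {Q : Md d}

@[simp] lemma BRmat_zero_zero (L : Fin d → Fin d → ℝ) : BRmat Q L 0 0 = 4 := by simp [BRmat]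

@[simp] lemma BRmat_zero_succ (L : Fin d → Fin d → ℝ) (j : Fin d) :
    BRmat Q L 0 j.succ = bip Q (L j) (L j) := by simp [BRmat]

@[simp] lemma BRmat_succ_zero (L : Fin d → Fin d → ℝ) (i : Fin d) :
    BRmat Q L i.succ 0 = bip Q (L i) (L i) := by simp [BRmat]

@[simp] lemma BRmat_succ_succ (L : Fin d → Fin d → ℝ) (i j : Fin d) :
    BRmat Q L i.succ j.succ = bip Q (L i) (L j) := by simp [BRmat]

lemma isHermitian_BRmat (hQ : Q.IsSymm) (L : Fin d → Fin d → ℝ) : (BRmat Q L).IsHermitian :=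
  IsHermitian.ext fun i j => by
    cases i using Fin.cases <;> cases j using Fin.cases <;> simp [bip_comm hQ]

lemma dotProduct_BRmat_mulVec (hQ : Q.IsSymm) {c : Fin d → ℝ} {L : Fin d → Fin d → ℝ}
    (hc : ∀ j, qf Q (c - L j) = qf Q c) (y : Fin (d + 1) → ℝ) :
    y ⬝ᵥ BRmat Q L *ᵥ y =
      qf Q (∑ j, y j.succ • L j + (2 * y 0) • c) + 4 * y 0 ^ 2 * (1 - qf Q c) := by
  have hcL : ∀ j, bip Q (L j) (L j) = 2 * bip Q c (L j) := fun j => by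
    have := hc j; rw [qf_sub hQ, qf_eq_bip (L j)] at this; linarith
  have hB : ∀ x y, bip Q x y = Matrix.toBilin' Q x y := fun x y =>
    (Matrix.toBilin'_apply' Q x y).symm
  have hsym : ∀ x y, Matrix.toBilin' Q x y = Matrix.toBilin' Q y x := fun x y => by
    rw [← hB, ← hB, bip_comm hQ]
  simp only [dotProduct, mulVec, Fin.sum_univ_succ, BRmat_zero_zero, BRmat_zero_succ,
    BRmat_succ_zero, BRmat_succ_succ, hcL]
  rw [qf_add hQ, qf_smul]
  simp only [qf_eq_bip, hB, map_sum, map_smul, LinearMap.sum_apply, LinearMap.smul_apply,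
    smul_eq_mul, hsym _ c, mul_add, Finset.mul_sum, Finset.sum_add_distrib]
  set B := Matrix.toBilin' Q
  have hquad : ∑ x, ∑ i, y x.succ * (y i.succ * B (L i) (L x)) =
      ∑ x, ∑ i, y x.succ * (B (L x) (L i) * y i.succ) := by
    rw [Finset.sum_comm]
    exact Finset.sum_congr rfl fun _ _ => Finset.sum_congr rfl fun _ _ => by ring
  have hlin : ∑ i, 2 * (2 * y 0 * (y i.succ * B c (L i))) =
      ∑ i, y 0 * (2 * B c (L i) * y i.succ) + ∑ x, y x.succ * (2 * B c (L x) * y 0) := by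
    rw [← Finset.sum_add_distrib]
    exact Finset.sum_congr rfl fun _ _ => by ring
  rw [hquad, hlin]
  ring

lemma posSemidef_BRmat_iff (hQ : Q.PosSemidef) {c : Fin d → ℝ} {L : Fin d → Fin d → ℝ}
    (hL : LinearIndependent ℝ L) (hc : ∀ j, qf Q (c - L j) = qf Q c) :
    (BRmat Q L).PosSemidef ↔ qf Q c ≤ 1 := by
  have hsymm := isSymm_of_posSemidef hQ
  constructor
  · intro h
    obtain ⟨z, hz⟩ : ∃ z : Fin d → ℝ, ∑ j, z j • L j = -c := by
      rw [← Submodule.mem_span_range_iff_exists_fun,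
        hL.span_eq_top_of_card_eq_finrank' (by simp)]
      trivial
    have := h.dotProduct_mulVec_nonneg (Fin.cons (1 / 2) z)
    rw [star_trivial, dotProduct_BRmat_mulVec hsymm hc] at this
    simp only [Fin.cons_succ, Fin.cons_zero, hz] at this
    norm_num [qf] at this
    exact this
  · intro h
    refine .of_dotProduct_mulVec_nonneg (isHermitian_BRmat hsymm L) fun y => ?_
    rw [star_trivial, dotProduct_BRmat_mulVec hsymm hc]
    have := qf_nonneg hQ (∑ j, y j.succ • L j + (2 * y 0) • c)
    nlinarith [sq_nonneg (y 0)]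

lemma posSemidef_BRmat_iff_of_isEmptySphere (hQ : Q.PosSemidef) {c : Fin d → ℝ} {ρ : ℝ}
    {S : Set (Fin d → ℝ)} (hS : IsEmptySphere Q c ρ S) {b : Fin d → ℝ} {L : Fin d → Fin d → ℝ}
    (hb : b ∈ latticeZ d ∩ convexHull ℝ S) (hL : ∀ j, b + L j ∈ latticeZ d ∩ convexHull ℝ S)
    (hLind : LinearIndependent ℝ L) :
    (BRmat Q L).PosSemidef ↔ ρ ≤ 1 := by
  have hbS := hS.1 b (hS.mem_of_mem_convexHull hQ hb.1 hb.2)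
  rw [← hbS]
  refine posSemidef_BRmat_iff hQ hLind fun j => ?_
  rw [hbS, sub_sub, hS.1 _ (hS.mem_of_mem_convexHull hQ (hL j).1 (hL j).2)]

end BravaisRyshkov

lemma posSemidef_blockDiagonal_iff {m o R : Type*} [Fintype m] [Fintype o] [DecidableEq o]
    [Ring R] [PartialOrder R] [StarRing R] [IsOrderedAddMonoid R] {M : o → Matrix m m R} :
    (blockDiagonal M).PosSemidef ↔ ∀ i, (M i).PosSemidef := by
  refine ⟨fun h i => ?_, fun h => ?_⟩
  · convert h.submatrix fun a => (a, i) using 1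
    ext a b
    simp
  · refine .of_dotProduct_mulVec_nonneg (isHermitian_blockDiagonal_iff.2 fun i => (h i).1)
      fun x => ?_
    have hx : star x ⬝ᵥ blockDiagonal M *ᵥ x =
        ∑ i, star (fun a => x (a, i)) ⬝ᵥ M i *ᵥ fun a => x (a, i) := by
      simp [dotProduct, mulVec, blockDiagonal_apply, Fintype.sum_prod_type, Finset.mul_sum]
      exact Finset.sum_comm
    rw [hx]
    exact Finset.sum_nonneg fun i _ => (h i).dotProduct_mulVec_nonneg _

theorem statement17_general (d n : ℕ) (Q : Md d) (hQ : Q.PosDef)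
    (P : Fin n → Set (Fin d → ℝ))
    (hdel : ∀ i, IsDelonePoly (latticeZ d) Q (P i) ∧ sdim (P i) = d)
    (hrep : ∀ S : Set (Fin d → ℝ), IsDelonePoly (latticeZ d) Q S → sdim S = d →
      ∃ i, EquivPolyQ Q (P i) S)
    (b : Fin n → (Fin d → ℝ)) (L : Fin n → Fin d → (Fin d → ℝ))
    (hb : ∀ i, b i ∈ latticeZ d ∩ P i)
    (hL : ∀ i j, b i + L i j ∈ latticeZ d ∩ P i)
    (hLind : ∀ i, LinearIndependent ℝ (L i)) :
    InhomMin Q ≤ 1 ↔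
      (Matrix.blockDiagonal fun i : Fin n => BRmat Q (L i)).PosSemidef := by
  rw [posSemidef_blockDiagonal_iff]
  constructor
  · intro hμ i
    obtain ⟨⟨S, hSΛ, hSne, hPS, c, r, hS⟩, -⟩ := hdel i
    replace hS : IsEmptySphere Q c (r ^ 2) S := hS
    have hbi := hb i
    have hLi := hL i
    rw [hPS] at hbi hLi
    rw [posSemidef_BRmat_iff_of_isEmptySphere hQ.posSemidef hS hbi hLi (hLind i),
      ← hS.latticeDistSq_eq hSΛ hSne]
    exact (latticeDistSq_le_inhomMin hQ.posSemidef c).trans hμ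
  · intro hBR
    obtain ⟨xs, hxs⟩ := exists_forall_latticeDistSq_le hQ.posSemidef
    have hS := isEmptySphere_nearestPoints hQ.posSemidef xs
    obtain ⟨i, U, hU, hUQ, t, hPi⟩ := hrep _
      (hS.isDelonePoly (fun _ hv => hv.1) (nearestPoints_nonempty hQ xs)
        (latticeDistSq_nonneg hQ.posSemidef xs))
      (sdim_convexHull_of_vectorSpan_eq_top (vectorSpan_nearestPoints_eq_top hQ hxs))
    have hbi := hb i
    have hLi := hL i
    rw [hPi, image_convexHull_intVec_add_rmat_mulVec] at hbi hLi
    rw [inhomMin_eq_latticeDistSq hQ.posSemidef hxs]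
    exact (posSemidef_BRmat_iff_of_isEmptySphere hQ.posSemidef (hS.image hU hUQ t) hbi hLi
      (hLind i)).1 (hBR i)

/-- Let `P₁, …, P_n` be a representative system of the `d`-dimensional
Delone polytopes of `Q` (vertex-set `ℤ^d`) up to equivalence with respect to `Q`, and for
each `Pᵢ` choose a `d`-simplex with vertices among those of `Pᵢ` (one vertex translated to
`bᵢ`, edge vectors `Lᵢ`).  Then `μ(Q) ≤ 1` iff the block diagonal matrix with blocks
`BR_{Lᵢ}(Q)` is positive semidefinite. -/
theorem statement17 (d n : ℕ) (Q : Md d) (hQ : Q.PosDef)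
    (P : Fin n → Set (Fin d → ℝ))
    (hdel : ∀ i, IsDelonePoly (latticeZ d) Q (P i) ∧ sdim (P i) = d)
    (hinequiv : ∀ i j : Fin n, i ≠ j → ¬ EquivPolyQ Q (P i) (P j))
    (hrep : ∀ S : Set (Fin d → ℝ), IsDelonePoly (latticeZ d) Q S → sdim S = d →
      ∃ i, EquivPolyQ Q (P i) S)
    (b : Fin n → (Fin d → ℝ)) (L : Fin n → Fin d → (Fin d → ℝ))
    (hb : ∀ i, b i ∈ latticeZ d ∩ P i)
    (hL : ∀ i j, b i + L i j ∈ latticeZ d ∩ P i)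
    (hLind : ∀ i, LinearIndependent ℝ (L i)) :
    InhomMin Q ≤ 1 ↔
      (Matrix.blockDiagonal fun i : Fin n => BRmat Q (L i)).PosSemidef :=
  statement17_general d n Q hQ P hdel hrep b L hb hL hLind

end Vor

end
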